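/- arXiv:1708.03167 — 2 statements merged into one kernel-verified Lean document; each statement's English description precedes it below -/
import Mathlib

section
/- Suppose v_1, …, v_n ∈ ℝ^n are eigenvectors of M with M v_k = λ_k v_k, v_1 = 𝟙 (with λ_1 = 1), and they are Π-orthonormal: v_k^T Π v_l = δ_{kl} for all k, l. Then for every t ∈ ℝ the autocovariance matrix admits the spectral decomposition B(t) = Σ_{k=2}^{n} exp(−t(1−λ_k)) (Π v_k)(Π v_k)^T. -/
/-!
Π-orthonormality of the `n` eigenvectors says `Vᵀ Π V = 1` for the matrix `V` of eigenvectors,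
hence `V Vᵀ Π = 1`, i.e. `∑ₖ vₖ (Π vₖ)ᵀ = 1`. Since `P(t) vₖ = exp(-t(1 - λₖ)) vₖ`, multiplying
this resolution of the identity by `Π P(t)` expands `Π P(t)` over all `k`; the term of
`v₁ = 𝟙` is `πᵀ π` because `Π 𝟙 = πᵀ`, and it cancels in `B(t)`.
-/

open Matrix

section

variable {ι : Type*} [Fintype ι] [DecidableEq ι]

-- Matrices carry no global norm; the operator norm gives the exponential series its `HasSum`.
open scoped Norms.Operator in
theorem Matrix.exp_mulVec_of_mulVec_eq_smul {𝕂 : Type*} [RCLike 𝕂] {N : Matrix ι ι 𝕂}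
    {w : ι → 𝕂} {μ : 𝕂} (h : N *ᵥ w = μ • w) :
    NormedSpace.exp N *ᵥ w = NormedSpace.exp μ • w := by
  have hpow (k : ℕ) : N ^ k *ᵥ w = μ ^ k • w := by
    induction k with
    | zero => simp
    | succ k ih => rw [pow_succ', ← mulVec_mulVec, ih, mulVec_smul, h, smul_smul, pow_succ]
  have hseries := (NormedSpace.exp_series_hasSum_exp' (𝕂 := 𝕂) N).map
    (mulVec.addMonoidHomLeft w) (continuous_id.matrix_mulVec continuous_const)
  refine hseries.unique ?_
  convert (NormedSpace.exp_series_hasSum_exp' (𝕂 := 𝕂) μ).smul_const w using 2 with k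
  simp [mulVec.addMonoidHomLeft, smul_mulVec, hpow, smul_smul]

theorem Matrix.sum_vecMulVec_vecMul_eq_one_of_orthonormal {R : Type*} [CommRing R]
    {S : Matrix ι ι R} {v : ι → ι → R}
    (h : ∀ k l, v k ⬝ᵥ S *ᵥ v l = if k = l then 1 else 0) :
    ∑ k, vecMulVec (v k) (v k ᵥ* S) = 1 := by
  have hW : of v * (S * (of v)ᵀ) = 1 := by
    ext k l
    rw [one_apply, ← h]
    simp [mul_apply, dotProduct, mulVec]
  have hW' : (of v)ᵀ * (of v * S) = 1 := by
    rw [mul_eq_one_comm, Matrix.mul_assoc, hW]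
  ext i j
  rw [← hW']
  simp [mul_apply, vecMulVec_apply, vecMul, dotProduct, Matrix.sum_apply]

theorem Matrix.eq_sum_smul_vecMulVec_of_mulVec_eq_smul {R κ : Type*} [CommRing R] [Fintype κ]
    {X : Matrix ι ι R} {v u : κ → ι → R} {c : κ → R}
    (hres : ∑ k, vecMulVec (v k) (u k) = 1) (hX : ∀ k, X *ᵥ v k = c k • v k) :
    X = ∑ k, c k • vecMulVec (v k) (u k) := by
  calc X = X * ∑ k, vecMulVec (v k) (u k) := by rw [hres, Matrix.mul_one]
    _ = ∑ k, c k • vecMulVec (v k) (u k) := by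
      simp only [Finset.mul_sum, mul_vecMulVec, hX, smul_vecMulVec]

end

theorem stmt_6_general (n : ℕ) [NeZero n]
    (d : Fin n → ℝ)
    (m : ℝ)
    (M : Matrix (Fin n) (Fin n) ℝ)
    (Pi : Matrix (Fin n) (Fin n) ℝ) (hPi : Pi = (2 * m)⁻¹ • Matrix.diagonal d)
    (P : ℝ → Matrix (Fin n) (Fin n) ℝ)
    (hP : ∀ t, P t = NormedSpace.exp ((-t) • ((1 : Matrix (Fin n) (Fin n) ℝ) - M)))
    (B : ℝ → Matrix (Fin n) (Fin n) ℝ)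
    (hB : ∀ t, B t = Pi * P t -
      Matrix.vecMulVec (fun i => d i / (2 * m)) (fun j => d j / (2 * m)))
    (v : Fin n → Fin n → ℝ) (lam : Fin n → ℝ)
    (hv : ∀ k, M.mulVec (v k) = lam k • v k)
    (hv1 : v 0 = fun _ => (1 : ℝ)) (hlam1 : lam 0 = 1)
    (horth : ∀ k l, (v k) ⬝ᵥ Pi.mulVec (v l) = if k = l then 1 else 0)
    (t : ℝ) :
    B t = ∑ k ∈ Finset.univ.erase 0,
      Real.exp (-t * (1 - lam k)) •
        Matrix.vecMulVec (Pi.mulVec (v k)) (Pi.mulVec (v k)) := by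
  have hPi_vecMul (x : Fin n → ℝ) : x ᵥ* Pi = Pi *ᵥ x := by
    rw [← mulVec_transpose, hPi, transpose_smul, diagonal_transpose]
  have hPv (k : Fin n) : P t *ᵥ v k = Real.exp (-t * (1 - lam k)) • v k := by
    rw [hP, Real.exp_eq_exp_ℝ]
    refine exp_mulVec_of_mulVec_eq_smul ?_
    rw [smul_mulVec, sub_mulVec, one_mulVec, hv, mul_smul, sub_smul, one_smul]
  have hPt := eq_sum_smul_vecMulVec_of_mulVec_eq_smul
    (sum_vecMulVec_vecMul_eq_one_of_orthonormal horth) hPv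
  have hPi_one : Pi *ᵥ v 0 = fun i => d i / (2 * m) := by
    ext i
    simp [hv1, hPi, mulVec, dotProduct, diagonal_apply, div_eq_inv_mul]
  rw [hB, hPt, Finset.mul_sum, ← Finset.sum_erase_add _ _ (Finset.mem_univ 0)]
  simp only [mul_smul_comm, mul_vecMulVec, hPi_vecMul]
  rw [hlam1, sub_self, mul_zero, Real.exp_zero, one_smul, hPi_one, add_sub_cancel_right]

/-- If `v_1, …, v_n` are `Π`-orthonormal eigenvectors of `M`
with `v_1 = 𝟙` (eigenvalue 1), then for every `t`,
`B(t) = ∑_{k=2}^n exp(−t(1−λ_k)) (Π v_k)(Π v_k)ᵀ`. -/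
theorem stmt_6 (n : ℕ) [NeZero n] (A : Matrix (Fin n) (Fin n) ℝ)
    (hAsymm : A.IsSymm) (hAnonneg : ∀ i j, 0 ≤ A i j)
    (d : Fin n → ℝ) (hd : ∀ i, d i = ∑ j, A i j) (hdpos : ∀ i, 0 < d i)
    (m : ℝ) (hm : m = (∑ i, ∑ j, A i j) / 2)
    (M : Matrix (Fin n) (Fin n) ℝ) (hM : M = (Matrix.diagonal d)⁻¹ * A)
    (Pi : Matrix (Fin n) (Fin n) ℝ) (hPi : Pi = (2 * m)⁻¹ • Matrix.diagonal d)
    (P : ℝ → Matrix (Fin n) (Fin n) ℝ)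
    (hP : ∀ t, P t = NormedSpace.exp ((-t) • ((1 : Matrix (Fin n) (Fin n) ℝ) - M)))
    (B : ℝ → Matrix (Fin n) (Fin n) ℝ)
    (hB : ∀ t, B t = Pi * P t -
      Matrix.vecMulVec (fun i => d i / (2 * m)) (fun j => d j / (2 * m)))
    (v : Fin n → Fin n → ℝ) (lam : Fin n → ℝ)
    (hv : ∀ k, M.mulVec (v k) = lam k • v k)
    (hv1 : v 0 = fun _ => (1 : ℝ)) (hlam1 : lam 0 = 1)
    (horth : ∀ k l, (v k) ⬝ᵥ Pi.mulVec (v l) = if k = l then 1 else 0)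
    (t : ℝ) :
    B t = ∑ k ∈ Finset.univ.erase 0,
      Real.exp (-t * (1 - lam k)) •
        Matrix.vecMulVec (Pi.mulVec (v k)) (Pi.mulVec (v k)) :=
  stmt_6_general n d m M Pi hPi P hP B hB v lam hv hv1 hlam1 horth t
end

section
/- Suppose v_1, …, v_n ∈ ℝ^n are eigenvectors of M with M v_k = λ_k v_k, v_1 = 𝟙 (with λ_1 = 1), and v_k^T Π v_l = δ_{kl}. Fix t ∈ ℝ and define node vectors x_i ∈ ℝ^{n−1} with k-th component (1 ≤ k ≤ n−1) equal to π_i v_{k+1,i}, and the (possibly indefinite) quadratic form q(y) = Σ_{k=1}^{n−1} (1 − t(1−λ_{k+1})) y_k² on ℝ^{n−1}. Then for every partition g = {g_1, …, g_c} of {1, …, n}, the linearized Markov Stability r_lin(t,g) := Σ_{s=1}^{c} Σ_{i,j ∈ g_s} B_lin(t)_{ij} satisfies r_lin(t,g) = Σ_{s=1}^{c} q(Σ_{i ∈ g_s} x_i); i.e., maximizing the linearized Markov Stability (equivalently, minimizing the Reichardt–Bornholdt Potts Hamiltonian) is a vector partitioning problem in a pseudo-Euclidean space. -/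
open Matrix

/-!
Put the `Π`-orthonormal eigenvectors as the columns of `V`. Then `Vᵀ Π V = 1`, hence also
`V Vᵀ Π = 1`, and since `Π((1 - t)I + tM) v_k = (1 - t(1 - λ_k)) Π v_k`, inserting `V Vᵀ Π`
gives the spectral expansion `Π((1 - t)I + tM) = ∑_k (1 - t(1 - λ_k)) (Π v_k)(Π v_k)ᵀ`.
Its `k = 0` term is `πᵀπ` because `v_0 = 𝟙` and `λ_0 = 1`, so it cancels in `B_lin(t)`, leaving
`B_lin(t)_{ij} = ∑_k (1 - t(1 - λ_{k+1})) x_{ik} x_{jk}`. Summed over `i, j` in a block this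
bilinear expression is `q` of the block sum.
With vertices indexed by `Fin (n+1)`, the node vectors live in `ℝ^n`.
-/

namespace Matrix

variable {ι R : Type*} [Fintype ι] [DecidableEq ι] [CommRing R]

theorem eq_sum_smul_vecMulVec_of_orthonormal {P W : Matrix ι ι R} {v : ι → ι → R} {c : ι → R}
    (horth : ∀ k l, v k ⬝ᵥ P *ᵥ v l = if k = l then 1 else 0)
    (hW : ∀ k, W *ᵥ v k = c k • P *ᵥ v k) :
    W = ∑ k, c k • vecMulVec (P *ᵥ v k) (v k ᵥ* P) := by
  set V : Matrix ι ι R := (of v)ᵀ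
  have hVPV : Vᵀ * P * V = 1 := by
    ext k l
    rw [one_apply, ← horth k l, Matrix.mul_assoc, mul_apply]
    simp [V, mul_apply, mulVec, dotProduct]
  have hWV : W * V = P * V * diagonal c := by
    ext i k
    rw [mul_diagonal]
    simpa [V, mul_apply, mulVec, dotProduct, mul_comm] using congrFun (hW k) i
  have hW : W = P * V * diagonal c * (Vᵀ * P) := by
    rw [← hWV, Matrix.mul_assoc, mul_eq_one_comm.mp hVPV, Matrix.mul_one]
  ext i j
  rw [hW, mul_apply, sum_apply]
  refine Finset.sum_congr rfl fun k _ => ?_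
  rw [mul_diagonal, smul_apply, vecMulVec_apply, smul_eq_mul]
  simp only [mul_apply, transpose_apply, of_apply, transpose_transpose, mulVec, dotProduct,
    vecMul, V]
  ring

theorem mul_interpolate_mulVec_of_mulVec_eq_smul {P M : Matrix ι ι R} {v : ι → R} {μ t : R}
    (hv : M *ᵥ v = μ • v) :
    (P * ((1 - t) • 1 + t • M)) *ᵥ v = (1 - t * (1 - μ)) • P *ᵥ v := by
  rw [← mulVec_mulVec, add_mulVec, smul_mulVec, smul_mulVec, one_mulVec, hv, smul_smul,
    ← add_smul, mulVec_smul]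
  congr 1
  ring

end Matrix

theorem Finset.sum_sum_sum_mul_mul_eq_sum_mul_sq {ι κ R : Type*} [Fintype κ] [CommRing R]
    (s : Finset ι) (c : κ → R) (x : ι → κ → R) :
    ∑ i ∈ s, ∑ j ∈ s, ∑ k, c k * (x i k * x j k) = ∑ k, c k * (∑ i ∈ s, x i : κ → R) k ^ 2 := by
  simp_rw [Finset.sum_apply, sq, Finset.sum_mul_sum, Finset.mul_sum]
  calc _ = ∑ i ∈ s, ∑ k, ∑ j ∈ s, c k * (x i k * x j k) :=
        Finset.sum_congr rfl fun _ _ => Finset.sum_comm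
    _ = _ := Finset.sum_comm

theorem stmt_17_general (n : ℕ) (d : Fin (n+1) → ℝ) (m : ℝ)
    (M : Matrix (Fin (n+1)) (Fin (n+1)) ℝ)
    (Pi : Matrix (Fin (n+1)) (Fin (n+1)) ℝ)
    (hPi : Pi = (2 * m)⁻¹ • Matrix.diagonal d)
    (Blin : ℝ → Matrix (Fin (n+1)) (Fin (n+1)) ℝ)
    (hBlin : ∀ t, Blin t =
      Pi * ((1 - t) • (1 : Matrix (Fin (n+1)) (Fin (n+1)) ℝ) + t • M) -
        Matrix.vecMulVec (fun i => d i / (2 * m)) (fun j => d j / (2 * m)))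
    (v : Fin (n+1) → Fin (n+1) → ℝ) (lam : Fin (n+1) → ℝ)
    (hv : ∀ k, M.mulVec (v k) = lam k • v k)
    (hv1 : v 0 = fun _ => (1 : ℝ)) (hlam1 : lam 0 = 1)
    (horth : ∀ k l, (v k) ⬝ᵥ Pi.mulVec (v l) = if k = l then 1 else 0)
    (t : ℝ) (x : Fin (n+1) → Fin n → ℝ)
    (hx : ∀ i k, x i k = (d i / (2 * m)) * v k.succ i)
    (q : (Fin n → ℝ) → ℝ)
    (hq : ∀ y, q y = ∑ k : Fin n, (1 - t * (1 - lam k.succ)) * (y k) ^ 2)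
    (c : ℕ) (g : Fin c → Finset (Fin (n+1))) :
    ∑ s : Fin c, ∑ i ∈ g s, ∑ j ∈ g s, Blin t i j =
      ∑ s : Fin c, q (∑ i ∈ g s, x i) := by
  set p : Fin (n+1) → ℝ := fun i => d i / (2 * m)
  have hPi_diag : Pi = diagonal p := by
    rw [hPi, ← diagonal_smul]
    congr 1
    ext i
    simp [p, div_eq_inv_mul]
  have hBlin_apply : ∀ i j,
      Blin t i j = ∑ k : Fin n, (1 - t * (1 - lam k.succ)) * (x i k * x j k) := by
    intro i j
    have hW := eq_sum_smul_vecMulVec_of_orthonormal horth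
      fun k => mul_interpolate_mulVec_of_mulVec_eq_smul (P := Pi) (t := t) (hv k)
    rw [hBlin, Matrix.sub_apply, hW, Matrix.sum_apply, Fin.sum_univ_succ, hv1, hlam1]
    simp only [sub_self, mul_zero, sub_zero, hPi_diag, Matrix.smul_apply, vecMulVec_apply,
      mulVec_diagonal, mul_one, vecMul_diagonal, one_mul, smul_eq_mul, add_sub_cancel_left, hx, p]
    exact Finset.sum_congr rfl fun _ _ => by ring
  refine Finset.sum_congr rfl fun s _ => ?_
  simp_rw [hq, hBlin_apply]
  exact Finset.sum_sum_sum_mul_mul_eq_sum_mul_sq _ _ _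

/-- With `Π`-orthonormal eigenvectors `v_1=𝟙, v_2, …, v_n` of `M`,
node vectors `x_i ∈ ℝ^{n−1}` with components `π_i v_{k+1,i}`, and the indefinite
quadratic form `q(y) = ∑_k (1 − t(1−λ_{k+1})) y_k²`, the linearized Markov
Stability of any partition satisfies
`∑_s ∑_{i,j∈g_s} B_lin(t)_{ij} = ∑_s q(∑_{i∈g_s} x_i)`.
(The graph has `n+1` vertices, so the node vectors live in `ℝ^n`.) -/
theorem stmt_17 (n : ℕ) (A : Matrix (Fin (n+1)) (Fin (n+1)) ℝ)
    (hAsymm : A.IsSymm) (hAnonneg : ∀ i j, 0 ≤ A i j)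
    (d : Fin (n+1) → ℝ) (hd : ∀ i, d i = ∑ j, A i j) (hdpos : ∀ i, 0 < d i)
    (m : ℝ) (hm : m = (∑ i, ∑ j, A i j) / 2)
    (M : Matrix (Fin (n+1)) (Fin (n+1)) ℝ) (hM : M = (Matrix.diagonal d)⁻¹ * A)
    (Pi : Matrix (Fin (n+1)) (Fin (n+1)) ℝ)
    (hPi : Pi = (2 * m)⁻¹ • Matrix.diagonal d)
    (Blin : ℝ → Matrix (Fin (n+1)) (Fin (n+1)) ℝ)
    (hBlin : ∀ t, Blin t =
      Pi * ((1 - t) • (1 : Matrix (Fin (n+1)) (Fin (n+1)) ℝ) + t • M) -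
        Matrix.vecMulVec (fun i => d i / (2 * m)) (fun j => d j / (2 * m)))
    (v : Fin (n+1) → Fin (n+1) → ℝ) (lam : Fin (n+1) → ℝ)
    (hv : ∀ k, M.mulVec (v k) = lam k • v k)
    (hv1 : v 0 = fun _ => (1 : ℝ)) (hlam1 : lam 0 = 1)
    (horth : ∀ k l, (v k) ⬝ᵥ Pi.mulVec (v l) = if k = l then 1 else 0)
    (t : ℝ) (x : Fin (n+1) → Fin n → ℝ)
    (hx : ∀ i k, x i k = (d i / (2 * m)) * v k.succ i)
    (q : (Fin n → ℝ) → ℝ)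
    (hq : ∀ y, q y = ∑ k : Fin n, (1 - t * (1 - lam k.succ)) * (y k) ^ 2)
    (c : ℕ) (g : Fin c → Finset (Fin (n+1)))
    (hdisj : ∀ s s' : Fin c, s ≠ s' → Disjoint (g s) (g s'))
    (hcover : Finset.univ.biUnion g = (Finset.univ : Finset (Fin (n+1)))) :
    ∑ s : Fin c, ∑ i ∈ g s, ∑ j ∈ g s, Blin t i j =
      ∑ s : Fin c, q (∑ i ∈ g s, x i) :=
  stmt_17_general n d m M Pi hPi Blin hBlin v lam hv hv1 hlam1 horth t x hx q hq c g
end
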